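/- arXiv:2006.08237 — 2 statements merged into one kernel-verified Lean document; each statement's English description precedes it below -/
import Mathlib

section
/- Let x=0 be an equilibrium of the Caputo system, with ν∈(0,1], and let P∈ℝ^{n×n} be a symmetric positive definite matrix. If zᵀ·P·f(t,z) ≤ 0 for all t∈(hℕ)_{a+(1−ν)h} and all z∈ℝⁿ, then the equilibrium x=0 of the Caputo system is stable. -/
open Finset Filter Matrix

/-- The `h`-factorial function `t_h^(ν) = h^ν Γ(t/h+1)/Γ(t/h+1-ν)`. -/
noncomputable def hfact (h t ν : ℝ) : ℝ :=
  h ^ ν * Real.Gamma (t / h + 1) / Real.Gamma (t / h + 1 - ν)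

/-- The forward `h`-difference operator. -/
noncomputable def fdiff (h : ℝ) (y : ℝ → ℝ) (t : ℝ) : ℝ := (y (t + h) - y t) / h

/-- The Caputo-like `h`-difference of order `ν ∈ (0,1]` of `y : (hℕ)_a → ℝ`,
evaluated at the grid point `t = a + (1-ν)h + k·h` of `(hℕ)_{a+(1-ν)h}`. -/
noncomputable def caputoD (h a ν : ℝ) (y : ℝ → ℝ) (k : ℕ) : ℝ :=
  if ν = 1 then fdiff h y (a + (k : ℝ) * h)
  else (h / Real.Gamma (1 - ν)) *
    ∑ j ∈ Finset.range (k + 1),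
      hfact h (a + (1 - ν) * h + (k : ℝ) * h - (a + (j : ℝ) * h + h)) (-ν) *
        fdiff h y (a + (j : ℝ) * h)

/-- `x : (hℕ)_a → ℝⁿ` is a solution of the Caputo system
`(_aΔ_{h,*}^ν x)(t) = f(t, x(t+νh))` on `(hℕ)_{a+(1-ν)h}` (componentwise). -/
def IsCaputoSol {n : ℕ} (h a ν : ℝ) (f : ℝ → (Fin n → ℝ) → (Fin n → ℝ))
    (x : ℝ → Fin n → ℝ) : Prop :=
  ∀ (k : ℕ) (i : Fin n),
    caputoD h a ν (fun t => x t i) k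
      = f (a + (1 - ν) * h + (k : ℝ) * h) (x (a + ((k : ℝ) + 1) * h)) i

/-!
With `X k = x (a + k * h)`, the Caputo equation at `t = a + (1 - ν) * h + k * h` reads
`∑_{j ≤ k} c (k - j) • (X (j + 1) - X j) = h ^ ν • f t (X (k + 1))` with the weights
`c m = Γ(m + 1 - ν) / (Γ(1 - ν) m!)`, which are nonnegative, nonincreasing and start at `c 0 = 1`.
Pairing this with `X (k + 1)` through `P` gives something nonpositive. Summation by parts and
`2 yᵀ P z ≤ yᵀ P y + zᵀ P z` then show by strong induction that `V z = zᵀ P z` never exceeds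
`V (X 0)`, and stability follows because `V` is continuous and bounded below by a positive
multiple of `‖z‖ ^ 2`.
-/

/-- The weight `Γ(m + 1 - ν) / (Γ(1 - ν) m!)`, written as a product so that it also makes sense
at `ν = 1`, where it is the Kronecker delta at `0`. -/
noncomputable def caputoWeight (ν : ℝ) (m : ℕ) : ℝ :=
  ∏ i ∈ range m, (1 - ν / (i + 1))

section caputoWeight

variable {ν : ℝ}

@[simp]
lemma caputoWeight_zero : caputoWeight ν 0 = 1 := prod_range_zero _

lemma caputoWeight_succ (m : ℕ) :
    caputoWeight ν (m + 1) = caputoWeight ν m * (1 - ν / (m + 1)) :=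
  prod_range_succ _ _

lemma caputoWeight_nonneg (hν : ν ≤ 1) (m : ℕ) : 0 ≤ caputoWeight ν m :=
  prod_nonneg fun i _ => sub_nonneg.2 <| div_le_one_of_le₀ (by linarith [i.cast_nonneg (α := ℝ)])
    (by positivity)

lemma caputoWeight_antitone (hν0 : 0 ≤ ν) (hν1 : ν ≤ 1) : Antitone (caputoWeight ν) :=
  antitone_nat_of_succ_le fun m => by
    rw [caputoWeight_succ]
    exact mul_le_of_le_one_right (caputoWeight_nonneg hν1 m)
      (sub_le_self _ (div_nonneg hν0 (by positivity)))

lemma caputoWeight_one_of_ne_zero {m : ℕ} (hm : m ≠ 0) : caputoWeight 1 m = 0 :=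
  prod_eq_zero (mem_range.2 (Nat.pos_of_ne_zero hm)) (by norm_num)

lemma Gamma_nat_add_one_sub (hν : ν < 1) (m : ℕ) :
    Real.Gamma (m + 1 - ν) = Real.Gamma (1 - ν) * m.factorial * caputoWeight ν m := by
  induction m with
  | zero => simp
  | succ m ih =>
    have hpos : 0 < (m : ℝ) + 1 - ν := by linarith [m.cast_nonneg (α := ℝ)]
    rw [Nat.cast_succ, show (m : ℝ) + 1 + 1 - ν = (m + 1 - ν) + 1 by ring,
      Real.Gamma_add_one hpos.ne', ih, caputoWeight_succ, Nat.factorial_succ]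
    push_cast
    field_simp

lemma hfact_nat_sub_mul (h : ℝ) (hh : 0 < h) (hν : ν < 1) (m : ℕ) :
    hfact h ((m - ν) * h) (-ν) = h ^ (-ν) * Real.Gamma (1 - ν) * caputoWeight ν m := by
  rw [hfact, mul_div_cancel_right₀ _ hh.ne', show (m : ℝ) - ν + 1 - -ν = m + 1 by ring,
    show (m : ℝ) - ν + 1 = m + 1 - ν by ring, Gamma_nat_add_one_sub hν,
    Real.Gamma_nat_eq_factorial]
  field_simp

end caputoWeight

lemma caputoD_eq_sum (h a ν : ℝ) (hh : 0 < h) (hν : ν ≤ 1) (y : ℝ → ℝ) (k : ℕ) :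
    caputoD h a ν y k
      = h ^ (1 - ν) * ∑ j ∈ range (k + 1), caputoWeight ν (k - j) * fdiff h y (a + j * h) := by
  rcases hν.lt_or_eq with hν | rfl
  · rw [caputoD, if_neg hν.ne, mul_sum, mul_sum]
    refine sum_congr rfl fun j hj => ?_
    have hjk : j ≤ k := Nat.lt_succ_iff.1 (mem_range.1 hj)
    rw [show a + (1 - ν) * h + k * h - (a + j * h + h) = ((k - j : ℕ) - ν) * h by
        rw [Nat.cast_sub hjk]; ring,
      hfact_nat_sub_mul h hh hν, Real.rpow_sub hh, Real.rpow_one,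
      Real.rpow_neg hh.le]
    have := (Real.Gamma_pos_of_pos (sub_pos.2 hν)).ne'
    field_simp
  · rw [caputoD, if_pos rfl, sub_self, Real.rpow_zero, one_mul, sum_range_succ,
      sum_eq_zero fun j hj => by
        rw [caputoWeight_one_of_ne_zero (Nat.sub_ne_zero_of_lt (mem_range.1 hj)), zero_mul]]
    simp

lemma IsCaputoSol.sum_caputoWeight_smul_sub {n : ℕ} {h a ν : ℝ} (hh : 0 < h) (hν : ν ≤ 1)
    {f : ℝ → (Fin n → ℝ) → (Fin n → ℝ)} {x : ℝ → Fin n → ℝ} (hx : IsCaputoSol h a ν f x)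
    (k : ℕ) :
    ∑ j ∈ range (k + 1), caputoWeight ν (k - j) •
        (x (a + ((j + 1 : ℕ) : ℝ) * h) - x (a + (j : ℝ) * h))
      = h ^ ν • f (a + (1 - ν) * h + k * h) (x (a + ((k + 1 : ℕ) : ℝ) * h)) := by
  ext i
  have hk := hx k i
  rw [caputoD_eq_sum h a ν hh hν] at hk
  simp only [fdiff, Nat.cast_succ, add_mul, one_mul, ← add_assoc] at hk ⊢
  rw [Pi.smul_apply, ← hk, Finset.sum_apply, smul_eq_mul, mul_sum, mul_sum]
  refine sum_congr rfl fun j _ => ?_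
  rw [Pi.smul_apply, Pi.sub_apply, smul_eq_mul, ← mul_assoc, ← Real.rpow_add hh,
    add_sub_cancel, Real.rpow_one]
  field_simp

/-- Summation by parts: the sum is `c 0 * u (k + 1)` minus a combination of `u 0, …, u k` with
the nonnegative weights `c k` and `c (k - j) - c (k - j + 1)`, which add up to `c 0`. -/
lemma le_sum_antitone_mul_sub {c u : ℕ → ℝ} (hc : Antitone c) {M : ℝ} (k : ℕ)
    (hu : ∀ j ≤ k, u j ≤ M) :
    c 0 * u (k + 1) - c k * u 0 - (c 0 - c k) * M
      ≤ ∑ j ∈ range (k + 1), c (k - j) * (u (j + 1) - u j) := by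
  induction k generalizing u with
  | zero => simp [mul_sub]
  | succ k ih =>
    have hshift := ih (u := fun j => u (j + 1)) fun j hj => hu (j + 1) (by omega)
    have hu1 : (c k - c (k + 1)) * u 1 ≤ (c k - c (k + 1)) * M :=
      mul_le_mul_of_nonneg_left (hu 1 (by omega)) (sub_nonneg.2 (hc k.le_succ))
    rw [sum_range_succ']
    simp only [Nat.add_sub_add_right, Nat.sub_zero] at hshift ⊢
    linarith

section BilinForm

variable {E : Type*} [AddCommGroup E] [Module ℝ E] {Q : LinearMap.BilinForm ℝ E}

lemma LinearMap.BilinForm.two_mul_apply_le (hQ : Q.IsSymm) (hQ₀ : ∀ z, 0 ≤ Q z z) (x y : E) :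
    2 * Q x y ≤ Q x x + Q y y := by
  have := hQ₀ (x - y)
  simp only [map_sub, LinearMap.sub_apply] at this
  rw [hQ.eq y x] at this
  linarith

theorem LinearMap.BilinForm.apply_self_le_of_sum_smul_sub_nonpos (hQ : Q.IsSymm)
    (hQ₀ : ∀ z, 0 ≤ Q z z) {c : ℕ → ℝ} (hc0 : c 0 = 1) (hc : ∀ m, 0 ≤ c m) (hanti : Antitone c)
    {X : ℕ → E}
    (hX : ∀ k, Q (X (k + 1)) (∑ j ∈ Finset.range (k + 1), c (k - j) • (X (j + 1) - X j)) ≤ 0)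
    (k : ℕ) : Q (X k) (X k) ≤ Q (X 0) (X 0) := by
  induction k using Nat.strong_induction_on with
  | _ k ih =>
    rcases k with _ | k
    · exact le_rfl
    set y := X (k + 1)
    have hu : ∀ j ≤ k, Q y (X j) ≤ (Q y y + Q (X 0) (X 0)) / 2 := fun j hj => by
      linarith [Q.two_mul_apply_le hQ hQ₀ y (X j), ih j (by omega)]
    have hparts := le_sum_antitone_mul_sub hanti k hu
    have hsum : ∑ j ∈ Finset.range (k + 1), c (k - j) * (Q y (X (j + 1)) - Q y (X j))
        = Q y (∑ j ∈ Finset.range (k + 1), c (k - j) • (X (j + 1) - X j)) := by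
      simp only [map_sum, map_smul, map_sub, smul_eq_mul]
    have hu0 := mul_le_mul_of_nonneg_left (hu 0 k.zero_le) (hc k)
    rw [hsum, hc0] at hparts
    linarith [hX k]

end BilinForm

lemma Matrix.PosDef.exists_pos_mul_sq_norm_le {n : ℕ} {P : Matrix (Fin n) (Fin n) ℝ}
    (hP : P.PosDef) : ∃ m > 0, ∀ z : Fin n → ℝ, m * ‖z‖ ^ 2 ≤ z ⬝ᵥ P *ᵥ z := by
  have hcont : Continuous fun z : Fin n → ℝ => z ⬝ᵥ P *ᵥ z := by fun_prop
  obtain ⟨m, hm, hmin⟩ := (isCompact_sphere (0 : Fin n → ℝ) 1).exists_forall_le'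
    hcont.continuousOn fun z hz => by
      simpa using hP.dotProduct_mulVec_pos (ne_zero_of_mem_unit_sphere ⟨z, hz⟩)
  refine ⟨m, hm, fun z => ?_⟩
  rcases eq_or_ne z 0 with rfl | hz
  · simp
  have hnz : ‖z‖ ≠ 0 := norm_ne_zero_iff.2 hz
  have hunit := hmin (‖z‖⁻¹ • z) (by
    rw [mem_sphere_zero_iff_norm, norm_smul, norm_inv, norm_norm, inv_mul_cancel₀ hnz])
  simp only [mulVec_smul, dotProduct_smul, smul_dotProduct, smul_eq_mul] at hunit
  have : ‖z‖⁻¹ * (‖z‖⁻¹ * (z ⬝ᵥ P *ᵥ z)) = (z ⬝ᵥ P *ᵥ z) / ‖z‖ ^ 2 := by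
    field_simp
  rw [this, le_div_iff₀ (by positivity)] at hunit
  exact hunit

theorem stmt3_general {n : ℕ} (h a ν : ℝ) (hh : 0 < h) (hν0 : 0 < ν) (hν1 : ν ≤ 1)
    (f : ℝ → (Fin n → ℝ) → (Fin n → ℝ))
    (P : Matrix (Fin n) (Fin n) ℝ) (hP : P.PosDef)
    (hle : ∀ (k : ℕ) (z : Fin n → ℝ),
      z ⬝ᵥ P.mulVec (f (a + (1 - ν) * h + (k : ℝ) * h) z) ≤ 0) :
    (∀ ε > (0 : ℝ), ∃ δ > (0 : ℝ), ∀ x : ℝ → Fin n → ℝ,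
      IsCaputoSol h a ν f x → ‖x a‖ < δ → ∀ k : ℕ, ‖x (a + (k : ℝ) * h)‖ < ε) := by
  obtain ⟨m, hm, hcoercive⟩ := hP.exists_pos_mul_sq_norm_le
  have hQ : (toBilin' P).IsSymm :=
    isSymm_toBilin'_iff_isSymm.2 (isHermitian_iff_isSymm.1 hP.isHermitian)
  have hQ₀ (z : Fin n → ℝ) : 0 ≤ toBilin' P z z := by
    simpa [toBilin'_apply'] using hP.posSemidef.dotProduct_mulVec_nonneg z
  intro ε hε
  have hcont : Continuous fun z : Fin n → ℝ => z ⬝ᵥ P *ᵥ z := by fun_prop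
  obtain ⟨δ, hδ, hsmall⟩ :=
    Metric.continuousAt_iff.1 (hcont.continuousAt (x := 0)) (m * ε ^ 2) (by positivity)
  refine ⟨δ, hδ, fun x hx hxa k => ?_⟩
  have hdecay := (toBilin' P).apply_self_le_of_sum_smul_sub_nonpos hQ hQ₀ caputoWeight_zero
    (caputoWeight_nonneg hν1) (caputoWeight_antitone hν0.le hν1)
    (X := fun j : ℕ => x (a + j * h)) (fun k => by
      rw [hx.sum_caputoWeight_smul_sub hh hν1 k, map_smul, toBilin'_apply', smul_eq_mul]
      exact mul_nonpos_of_nonneg_of_nonpos (by positivity) (hle k _)) k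
  have hstart := hsmall (x := x a) (by simpa using hxa)
  simp only [toBilin'_apply', Nat.cast_zero, zero_mul, add_zero] at hdecay
  simp only [mulVec_zero, dotProduct_zero, dist_zero_right, Real.norm_eq_abs] at hstart
  have hsq : m * ‖x (a + k * h)‖ ^ 2 < m * ε ^ 2 :=
    (hcoercive _).trans_lt (hdecay.trans_lt ((le_abs_self _).trans_lt hstart))
  exact lt_of_pow_lt_pow_left₀ 2 hε.le (lt_of_mul_lt_mul_left hsq hm.le)

theorem stmt3 {n : ℕ} (hn : 1 ≤ n) (h a ν : ℝ) (hh : 0 < h) (hν0 : 0 < ν) (hν1 : ν ≤ 1)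
    (f : ℝ → (Fin n → ℝ) → (Fin n → ℝ))
    (hf0 : ∀ k : ℕ, f (a + (1 - ν) * h + (k : ℝ) * h) 0 = 0)
    (P : Matrix (Fin n) (Fin n) ℝ) (hPsym : P.IsSymm) (hP : P.PosDef)
    (hle : ∀ (k : ℕ) (z : Fin n → ℝ),
      z ⬝ᵥ P.mulVec (f (a + (1 - ν) * h + (k : ℝ) * h) z) ≤ 0) :
    (∀ ε > (0 : ℝ), ∃ δ > (0 : ℝ), ∀ x : ℝ → Fin n → ℝ,
      IsCaputoSol h a ν f x → ‖x a‖ < δ → ∀ k : ℕ, ‖x (a + (k : ℝ) * h)‖ < ε) :=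
  stmt3_general h a ν hh hν0 hν1 f P hP hle
end

section
/- Let h>0, a∈ℝ, ν∈(0,1], and let y:(hℕ)_a→ℝ. Then (_aΔ_h^ν y²)(t) ≤ 2·y(t+νh)·(_aΔ_h^ν y)(t) for all t∈(hℕ)_{a+(1−ν)h}, where y² denotes the function t↦y(t)². -/
open Finset Filter Matrix

/-- The fractional `h`-sum of order `μ > 0` of `y : (hℕ)_a → ℝ`, evaluated at the
grid point `t = a + μh + k·h` of `(hℕ)_{a+μh}`. -/
noncomputable def hSum (h a μ : ℝ) (y : ℝ → ℝ) (k : ℕ) : ℝ :=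
  (h / Real.Gamma μ) *
    ∑ j ∈ Finset.range (k + 1),
      hfact h (a + μ * h + (k : ℝ) * h - (a + (j : ℝ) * h + h)) (μ - 1) * y (a + (j : ℝ) * h)

/-- The Riemann–Liouville-like `h`-difference of order `ν ∈ (0,1]` of `y : (hℕ)_a → ℝ`,
evaluated at the grid point `t = a + (1-ν)h + k·h` of `(hℕ)_{a+(1-ν)h}`:
for `ν ∈ (0,1)` it is `Δ_h` applied to the `(1-ν)`-fractional `h`-sum. -/
noncomputable def rlD (h a ν : ℝ) (y : ℝ → ℝ) (k : ℕ) : ℝ :=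
  if ν = 1 then fdiff h y (a + (k : ℝ) * h)
  else (hSum h a (1 - ν) y (k + 1) - hSum h a (1 - ν) y k) / h

/-- Auxiliary: `Γ(m+μ)/Γ(m+1)`. -/
noncomputable def Gm (μ : ℝ) (m : ℕ) : ℝ :=
  Real.Gamma ((m : ℝ) + μ) / Real.Gamma ((m : ℝ) + 1)

lemma Gm_pos {μ : ℝ} (hμ : 0 < μ) (m : ℕ) : 0 < Gm μ m := by
  apply div_pos
  · exact Real.Gamma_pos_of_pos (by positivity)
  · exact Real.Gamma_pos_of_pos (by positivity)

lemma Gm_zero {μ : ℝ} : Gm μ 0 = Real.Gamma μ := by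
  simp [Gm, Real.Gamma_one]

lemma Gm_succ_le {μ : ℝ} (hμ0 : 0 < μ) (hμ1 : μ < 1) (m : ℕ) :
    Gm μ (m + 1) ≤ Gm μ m := by
  have h1 : Real.Gamma ((m : ℝ) + 1 + μ) = ((m : ℝ) + μ) * Real.Gamma ((m : ℝ) + μ) := by
    have := Real.Gamma_add_one (show ((m : ℝ) + μ) ≠ 0 by positivity)
    rw [show (m : ℝ) + 1 + μ = (m : ℝ) + μ + 1 by ring, this]
  have h2 : Real.Gamma ((m : ℝ) + 1 + 1) = ((m : ℝ) + 1) * Real.Gamma ((m : ℝ) + 1) := by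
    have := Real.Gamma_add_one (show ((m : ℝ) + 1) ≠ 0 by positivity)
    rw [this]
  have hg1 : 0 < Real.Gamma ((m : ℝ) + μ) := Real.Gamma_pos_of_pos (by positivity)
  have hg2 : 0 < Real.Gamma ((m : ℝ) + 1) := Real.Gamma_pos_of_pos (by positivity)
  unfold Gm
  push_cast
  rw [h1, h2]
  rw [div_le_div_iff₀ (by positivity) hg2]
  nlinarith [mul_pos hg1 hg2]

lemma hfact_eval {h μ : ℝ} (hh : 0 < h) (x : ℝ) :
    hfact h ((μ + x - 1) * h) (μ - 1) = h ^ (μ - 1) * (Real.Gamma (x + μ) / Real.Gamma (x + 1)) := by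
  unfold hfact
  have hne : h ≠ 0 := ne_of_gt hh
  rw [mul_div_cancel_right₀ _ hne]
  rw [show μ + x - 1 + 1 = x + μ by ring, show x + μ - (μ - 1) = x + 1 by ring]
  ring

lemma hSum_eq {h μ : ℝ} (hh : 0 < h) (a : ℝ) (y : ℝ → ℝ) (k : ℕ) :
    hSum h a μ y k = (h * h ^ (μ - 1) / Real.Gamma μ) *
      ∑ j ∈ Finset.range (k + 1), Gm μ (k - j) * y (a + (j : ℝ) * h) := by
  unfold hSum
  rw [Finset.mul_sum, Finset.mul_sum]
  apply Finset.sum_congr rfl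
  intro j hj
  have hjk : j ≤ k := Nat.lt_succ_iff.mp (Finset.mem_range.mp hj)
  have harg : a + μ * h + (k : ℝ) * h - (a + (j : ℝ) * h + h)
      = (μ + ((k - j : ℕ) : ℝ) - 1) * h := by
    push_cast [Nat.cast_sub hjk]
    ring
  rw [harg, hfact_eval hh]
  unfold Gm
  rw [show ((k - j : ℕ) : ℝ) + μ = μ + ((k - j : ℕ) : ℝ) by ring]
  ring

lemma rlD_eq {h μ : ℝ} (hh : 0 < h) (hμ : 0 < μ) (a : ℝ) (y : ℝ → ℝ) (k : ℕ) :
    (hSum h a μ y (k + 1) - hSum h a μ y k) / h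
      = (h ^ (μ - 1) / Real.Gamma μ) *
        (Real.Gamma μ * y (a + ((k : ℝ) + 1) * h) +
          ∑ j ∈ Finset.range (k + 1),
            (Gm μ (k + 1 - j) - Gm μ (k - j)) * y (a + (j : ℝ) * h)) := by
  have hne : h ≠ 0 := ne_of_gt hh
  rw [hSum_eq hh, hSum_eq hh]
  rw [Finset.sum_range_succ (f := fun j => Gm μ (k + 1 - j) * y (a + (j : ℝ) * h))]
  have hlast : Gm μ (k + 1 - (k + 1)) = Real.Gamma μ := by
    simp [Gm_zero]
  rw [hlast]
  have hsplit : ∀ j ∈ Finset.range (k + 1),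
      (Gm μ (k + 1 - j) - Gm μ (k - j)) * y (a + (j : ℝ) * h)
        = Gm μ (k + 1 - j) * y (a + (j : ℝ) * h) - Gm μ (k - j) * y (a + (j : ℝ) * h) := by
    intro j _; ring
  rw [Finset.sum_congr rfl hsplit, Finset.sum_sub_distrib]
  push_cast
  field_simp
  ring

theorem stmt6 (h a ν : ℝ) (hh : 0 < h) (hν0 : 0 < ν) (hν1 : ν ≤ 1)
    (y : ℝ → ℝ) :
    ∀ k : ℕ, rlD h a ν (fun t => y t ^ 2) k
      ≤ 2 * y (a + ((k : ℝ) + 1) * h) * rlD h a ν y k := by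
  intro k
  by_cases hcase : ν = 1
  · -- ν = 1 case
    simp only [rlD, hcase, if_true, fdiff]
    have ht : a + (k : ℝ) * h + h = a + ((k : ℝ) + 1) * h := by ring
    rw [ht, ← mul_div_assoc, div_le_div_iff₀ hh hh]
    nlinarith [sq_nonneg (y (a + ((k : ℝ) + 1) * h) - y (a + (k : ℝ) * h)), hh.le]
  · -- 0 < ν < 1 case
    have hν1' : ν < 1 := lt_of_le_of_ne hν1 hcase
    set μ := 1 - ν with hμdef
    have hμ0 : 0 < μ := by simp [hμdef]; linarith
    have hμ1 : μ < 1 := by simp [hμdef]; linarith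
    simp only [rlD, if_neg hcase]
    rw [rlD_eq hh hμ0, rlD_eq hh hμ0]
    set Y := y (a + ((k : ℝ) + 1) * h) with hY
    set C := h ^ (μ - 1) / Real.Gamma μ with hC
    have hC0 : 0 < C := div_pos (Real.rpow_pos_of_pos hh _) (Real.Gamma_pos_of_pos hμ0)
    -- the key inner inequality
    have key : Real.Gamma μ * Y ^ 2 +
        ∑ j ∈ Finset.range (k + 1), (Gm μ (k + 1 - j) - Gm μ (k - j)) * y (a + (j : ℝ) * h) ^ 2
        ≤ 2 * Y * (Real.Gamma μ * Y +
          ∑ j ∈ Finset.range (k + 1), (Gm μ (k + 1 - j) - Gm μ (k - j)) * y (a + (j : ℝ) * h)) := by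
      have hsumD : ∑ j ∈ Finset.range (k + 1), (Gm μ (k + 1 - j) - Gm μ (k - j))
          = Gm μ (k + 1) - Gm μ 0 := by
        have hrefl := Finset.sum_range_reflect (fun m => Gm μ (m + 1) - Gm μ m) (k + 1)
        rw [← Finset.sum_range_sub (fun m => Gm μ m) (k + 1), ← hrefl]
        apply Finset.sum_congr rfl
        intro j hj
        have hjk : j ≤ k := Nat.lt_succ_iff.mp (Finset.mem_range.mp hj)
        have h1 : k + 1 - 1 - j = k - j := by omega
        have h2 : k - j + 1 = k + 1 - j := by omega
        rw [h1, h2]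
      have expand : ∀ j ∈ Finset.range (k + 1),
          (Gm μ (k + 1 - j) - Gm μ (k - j)) * y (a + (j : ℝ) * h) ^ 2
            - 2 * Y * ((Gm μ (k + 1 - j) - Gm μ (k - j)) * y (a + (j : ℝ) * h))
          = (Gm μ (k + 1 - j) - Gm μ (k - j)) * (y (a + (j : ℝ) * h) - Y) ^ 2
            - (Gm μ (k + 1 - j) - Gm μ (k - j)) * Y ^ 2 := by
        intro j _; ring
      have hDle : ∀ j ∈ Finset.range (k + 1),
          (Gm μ (k + 1 - j) - Gm μ (k - j)) * (y (a + (j : ℝ) * h) - Y) ^ 2 ≤ 0 := by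
        intro j hj
        have hjk : j ≤ k := Nat.lt_succ_iff.mp (Finset.mem_range.mp hj)
        have h2 : k + 1 - j = (k - j) + 1 := by omega
        have : Gm μ (k + 1 - j) - Gm μ (k - j) ≤ 0 := by
          rw [h2]; linarith [Gm_succ_le hμ0 hμ1 (k - j)]
        exact mul_nonpos_of_nonpos_of_nonneg this (sq_nonneg _)
      have hsum_nonpos : ∑ j ∈ Finset.range (k + 1),
          (Gm μ (k + 1 - j) - Gm μ (k - j)) * (y (a + (j : ℝ) * h) - Y) ^ 2 ≤ 0 :=
        Finset.sum_nonpos hDle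
      have hGpos : 0 < Gm μ (k + 1) := Gm_pos hμ0 (k + 1)
      have hident : Real.Gamma μ * Y ^ 2 +
          ∑ j ∈ Finset.range (k + 1), (Gm μ (k + 1 - j) - Gm μ (k - j)) * y (a + (j : ℝ) * h) ^ 2
          - 2 * Y * (Real.Gamma μ * Y +
            ∑ j ∈ Finset.range (k + 1), (Gm μ (k + 1 - j) - Gm μ (k - j)) * y (a + (j : ℝ) * h))
          = (∑ j ∈ Finset.range (k + 1),
              (Gm μ (k + 1 - j) - Gm μ (k - j)) * (y (a + (j : ℝ) * h) - Y) ^ 2)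
            - Gm μ (k + 1) * Y ^ 2 := by
        have h4 : ∑ j ∈ Finset.range (k + 1),
            ((Gm μ (k + 1 - j) - Gm μ (k - j)) * y (a + (j : ℝ) * h) ^ 2
              - 2 * Y * ((Gm μ (k + 1 - j) - Gm μ (k - j)) * y (a + (j : ℝ) * h)))
            = (∑ j ∈ Finset.range (k + 1),
                (Gm μ (k + 1 - j) - Gm μ (k - j)) * y (a + (j : ℝ) * h) ^ 2)
              - 2 * Y * ∑ j ∈ Finset.range (k + 1),
                (Gm μ (k + 1 - j) - Gm μ (k - j)) * y (a + (j : ℝ) * h) := by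
          rw [Finset.sum_sub_distrib, ← Finset.mul_sum]
        have h3 : ∑ j ∈ Finset.range (k + 1),
            ((Gm μ (k + 1 - j) - Gm μ (k - j)) * y (a + (j : ℝ) * h) ^ 2
              - 2 * Y * ((Gm μ (k + 1 - j) - Gm μ (k - j)) * y (a + (j : ℝ) * h)))
            = (∑ j ∈ Finset.range (k + 1),
                (Gm μ (k + 1 - j) - Gm μ (k - j)) * (y (a + (j : ℝ) * h) - Y) ^ 2)
              - (∑ j ∈ Finset.range (k + 1), (Gm μ (k + 1 - j) - Gm μ (k - j))) * Y ^ 2 := by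
          rw [Finset.sum_mul, ← Finset.sum_sub_distrib]
          exact Finset.sum_congr rfl expand
        rw [Gm_zero] at hsumD
        linear_combination h3 - h4 - Y ^ 2 * hsumD
      nlinarith [mul_nonneg hGpos.le (sq_nonneg Y)]
    calc C * (Real.Gamma μ * Y ^ 2 +
          ∑ j ∈ Finset.range (k + 1), (Gm μ (k + 1 - j) - Gm μ (k - j)) * y (a + (j : ℝ) * h) ^ 2)
        ≤ C * (2 * Y * (Real.Gamma μ * Y +
          ∑ j ∈ Finset.range (k + 1), (Gm μ (k + 1 - j) - Gm μ (k - j)) * y (a + (j : ℝ) * h))) :=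
          mul_le_mul_of_nonneg_left key hC0.le
      _ = 2 * Y * (C * (Real.Gamma μ * Y +
          ∑ j ∈ Finset.range (k + 1), (Gm μ (k + 1 - j) - Gm μ (k - j)) * y (a + (j : ℝ) * h))) := by
          ring
end
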